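/- Let A = {0,1} and n0 ≥ 2. The sequences γ^{n0,1} and ρ^{n0,1} are σ_1-Gray cycles over {0,1}^{n0}. Moreover γ^{n0,1}_{[0]} = 0^{n0}, ρ^{n0,1}_{[0]} = 1·0^{n0−1}, γ^{n0,1}_{[2^{n0}−1]} = 0^{n0−1}·1, and ρ^{n0,1}_{[2^{n0}−1]} = 1·0^{n0−2}·1. -/

import Mathlib

/-!
The reflected code `g^{m,1}` is itself a `σ_1`-Gray cycle over `{0,1}^m` for `m ≥ 1`: by induction
on `m`, consecutive words inside each half of `(0·g, 1·g^R)` differ only in their tails, while at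
the middle junction and at the wrap-around the two words are `a·u` and `b·u` with `a ≠ b`.
Up to indices `< 2^{n0}`, `ρ^{n0,1}` is `g^{n0,1}` rotated by one step and `γ^{n0,1}` is its
reversal rotated likewise, and both operations preserve Gray cycles. The four boundary words are
read off the recursion.
-/

/-- Hamming distance between two words (lists) of the same length:
the number of positions in which they differ. -/
def hammingL {α : Type*} [DecidableEq α] (w w' : List α) : ℕ :=
  ((w.zip w').filter fun q => decide (q.1 ≠ q.2)).length

/-- `w` (restricted to indices `< N`) is a `σ_k`-Gray cycle over `X`:
its terms are pairwise distinct and enumerate `X` (a bijection from `[0, N-1]` onto `X`),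
two consecutive terms have the same length and Hamming distance exactly `k`, and so do
the first and the last term. -/
def IsGrayCycleOn {α : Type*} [DecidableEq α] (k N : ℕ) (w : ℕ → List α)
    (X : Set (List α)) : Prop :=
  Set.BijOn w (Set.Iio N) X ∧
  (∀ i, 1 ≤ i → i < N →
    (w (i - 1)).length = (w i).length ∧ hammingL (w (i - 1)) (w i) = k) ∧
  (0 < N → (w (N - 1)).length = (w 0).length ∧ hammingL (w (N - 1)) (w 0) = k)

/-- The bit complement `θ : 0 ↔ 1` on the binary alphabet `{0,1}`. -/
def cpl (x : Fin 2) : Fin 2 := x + 1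

/-- The bit complement extended letterwise to binary words. -/
def cplW (w : List (Fin 2)) : List (Fin 2) := w.map cpl

/-- The reflected binary Gray code `g^{m,1}` over words of length `m`:
`g^{0,1} = (ε)` and `g^{m+1,1} = (0·g^{m,1}, 1·(g^{m,1})^R)`. -/
def binGray : ℕ → List (List (Fin 2))
  | 0 => [[]]
  | m + 1 =>
      (binGray m).map (fun w => 0 :: w) ++ (binGray m).reverse.map (fun w => 1 :: w)

/-- The sequence `γ^{n0,1}`: `γ^{n0,1}_{[0]} = g^{n0,1}_{[0]}` and
`γ^{n0,1}_{[i]} = g^{n0,1}_{[2^{n0} - i]}` for `1 ≤ i ≤ 2^{n0} - 1`. -/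
def gamma1 (n0 i : ℕ) : List (Fin 2) :=
  if i = 0 then (binGray n0).getD 0 [] else (binGray n0).getD (2 ^ n0 - i) []

/-- The sequence `ρ^{n0,1}`: `ρ^{n0,1}_{[0]} = g^{n0,1}_{[2^{n0}-1]}` and
`ρ^{n0,1}_{[i]} = g^{n0,1}_{[i-1]}` for `1 ≤ i ≤ 2^{n0} - 1`. -/
def rho1 (n0 i : ℕ) : List (Fin 2) :=
  if i = 0 then (binGray n0).getD (2 ^ n0 - 1) [] else (binGray n0).getD (i - 1) []

/-- `grSeq n0 true t i` (resp. `grSeq n0 false t i`) is the term of index `i` of the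
sequence `γ^{n0+2t, 2t+1}` (resp. `ρ^{n0+2t, 2t+1}`), built inductively: the base cases
are `γ^{n0,1}` and `ρ^{n0,1}`, and, writing `i = q·2^m + r` with `m = n0 + 2t` and
`r < 2^m`, `γ^{m+2, (2t+1)+2}_{[i]}` is `θ^r(00)·γ^{m,2t+1}_{[r]}`, `θ^r(01)·ρ^{m,2t+1}_{[r]}`,
`θ^r(11)·γ^{m,2t+1}_{[r]}`, `θ^r(10)·ρ^{m,2t+1}_{[r]}` according to `q = 0, 1, 2, 3`, and
`ρ^{m+2, (2t+1)+2}_{[i]}` is `θ^r(10)·γ^{m,2t+1}_{[r]}`, `θ^r(11)·ρ^{m,2t+1}_{[r]}`,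
`θ^r(01)·γ^{m,2t+1}_{[r]}`, `θ^r(00)·ρ^{m,2t+1}_{[r]}` according to `q = 0, 1, 2, 3`. -/
def grSeq (n0 : ℕ) : Bool → ℕ → ℕ → List (Fin 2)
  | b, 0, i => if b then gamma1 n0 i else rho1 n0 i
  | b, t + 1, i =>
      cplW^[i % 2 ^ (n0 + 2 * t)]
        (if b then
          (if i / 2 ^ (n0 + 2 * t) = 0 then [0, 0]
           else if i / 2 ^ (n0 + 2 * t) = 1 then [0, 1]
           else if i / 2 ^ (n0 + 2 * t) = 2 then [1, 1] else [1, 0])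
         else
          (if i / 2 ^ (n0 + 2 * t) = 0 then [1, 0]
           else if i / 2 ^ (n0 + 2 * t) = 1 then [1, 1]
           else if i / 2 ^ (n0 + 2 * t) = 2 then [0, 1] else [0, 0])) ++
        grSeq n0 (i / 2 ^ (n0 + 2 * t) % 2 == 0) t (i % 2 ^ (n0 + 2 * t))

/-- For odd `k` and `n ≥ k + 1`, `gammaNK n k i` is the term `γ^{n,k}_{[i]}`
(here `n0 = n - k + 1` and `k = 2·(k/2) + 1`). -/
def gammaNK (n k i : ℕ) : List (Fin 2) := grSeq (n + 1 - k) true (k / 2) i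

/-- For odd `k` and `n ≥ k + 1`, `rhoNK n k i` is the term `ρ^{n,k}_{[i]}`. -/
def rhoNK (n k i : ℕ) : List (Fin 2) := grSeq (n + 1 - k) false (k / 2) i

section Hamming

variable {α : Type*} [DecidableEq α]

theorem hammingL_cons (a b : α) (u v : List α) :
    hammingL (a :: u) (b :: v) = (if a = b then 0 else 1) + hammingL u v := by
  by_cases h : a = b <;> simp [hammingL, h, Nat.add_comm]

theorem hammingL_self (u : List α) : hammingL u u = 0 := by
  induction u with
  | nil => rfl
  | cons a u ih => simp [hammingL_cons, ih]

theorem hammingL_comm (u v : List α) : hammingL u v = hammingL v u := by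
  simp only [hammingL, ← List.zip_swap u v, List.filter_map, List.length_map]
  congr 2
  funext q
  simp [eq_comm]

/-- The relation `σ_k` of the paper. -/
def SubstRel (k : ℕ) (u v : List α) : Prop := u.length = v.length ∧ hammingL u v = k

theorem SubstRel.symm {k : ℕ} {u v : List α} (h : SubstRel k u v) : SubstRel k v u :=
  ⟨h.1.symm, hammingL_comm v u ▸ h.2⟩

theorem SubstRel.cons {k : ℕ} {u v : List α} (a : α)
    (h : SubstRel k u v) : SubstRel k (a :: u) (a :: v) :=
  ⟨by simp [h.1], by simp [hammingL_cons, h.2]⟩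

theorem substRel_one_cons_cons {a b : α} (hab : a ≠ b)
    (u : List α) : SubstRel 1 (a :: u) (b :: u) :=
  ⟨rfl, by simp [hammingL_cons, hab, hammingL_self]⟩

end Hamming

section GrayCycle

open Set

variable {α : Type*} [DecidableEq α] {k N : ℕ} {w : ℕ → List α} {X : Set (List α)}

theorem isGrayCycleOn_iff :
    IsGrayCycleOn k N w X ↔ BijOn w (Iio N) X ∧
      (∀ i, 1 ≤ i → i < N → SubstRel k (w (i - 1)) (w i)) ∧
      (0 < N → SubstRel k (w (N - 1)) (w 0)) :=
  Iff.rfl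

theorem IsGrayCycleOn.congr {w' : ℕ → List α} (h : IsGrayCycleOn k N w X)
    (hw : ∀ i < N, w' i = w i) :
    IsGrayCycleOn k N w' X := by
  obtain ⟨hbij, hstep, hclose⟩ := h
  refine ⟨hbij.congr fun i hi => (hw i hi).symm, fun i h1 hi => ?_, fun hN => ?_⟩
  · rw [hw i hi, hw (i - 1) (by omega)]
    exact hstep i h1 hi
  · rw [hw 0 hN, hw (N - 1) (by omega)]
    exact hclose hN

theorem isGrayCycleOn_iff_cyclic (hN : 0 < N) :
    IsGrayCycleOn k N w X ↔
      BijOn w (Iio N) X ∧ ∀ i < N, SubstRel k (w i) (w ((i + 1) % N)) := by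
  rw [isGrayCycleOn_iff]
  constructor
  · rintro ⟨hbij, hstep, hclose⟩
    refine ⟨hbij, fun i hi => ?_⟩
    rcases Nat.lt_or_ge (i + 1) N with hlt | hge
    · rw [Nat.mod_eq_of_lt hlt]
      exact hstep (i + 1) (by omega) hlt
    · obtain rfl : i = N - 1 := by omega
      rw [Nat.sub_add_cancel hN, Nat.mod_self]
      exact hclose hN
  · rintro ⟨hbij, hstep⟩
    refine ⟨hbij, fun i h1 hi => ?_, fun _ => ?_⟩
    · have := hstep (i - 1) (by omega)
      rwa [Nat.sub_add_cancel h1, Nat.mod_eq_of_lt hi] at this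
    · have := hstep (N - 1) (by omega)
      rwa [Nat.sub_add_cancel hN, Nat.mod_self] at this

theorem IsGrayCycleOn.comp_reverse (h : IsGrayCycleOn k N w X) :
    IsGrayCycleOn k N (fun i => w (N - 1 - i)) X := by
  obtain ⟨hbij, hstep, hclose⟩ := isGrayCycleOn_iff.mp h
  have hmaps : MapsTo (fun i => N - 1 - i) (Iio N) (Iio N) := fun i hi => by
    simp only [mem_Iio] at hi ⊢; omega
  have hrev : BijOn (fun i => N - 1 - i) (Iio N) (Iio N) :=
    ((finite_Iio N).injOn_iff_bijOn_of_mapsTo hmaps).mp fun i hi j hj hij => by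
      simp only [mem_Iio] at hi hj hij; omega
  refine isGrayCycleOn_iff.mpr ⟨hbij.comp hrev, fun i h1 hi => ?_, fun hN => ?_⟩
  · have := (hstep (N - i) (by omega) (by omega)).symm
    rwa [show N - i - 1 = N - 1 - i by omega, show N - i = N - 1 - (i - 1) by omega] at this
  · have := (hclose hN).symm
    rwa [← Nat.sub_self (N - 1), ← Nat.sub_zero (N - 1)] at this

theorem IsGrayCycleOn.comp_rotate (h : IsGrayCycleOn k N w X) (c : ℕ) :
    IsGrayCycleOn k N (fun i => w ((i + c) % N)) X := by
  rcases Nat.eq_zero_or_pos N with rfl | hN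
  · exact ⟨by simpa [bijOn_empty_iff_left] using h.1, by simp, by simp⟩
  rw [isGrayCycleOn_iff_cyclic hN] at h ⊢
  obtain ⟨hbij, hstep⟩ := h
  have hrot : BijOn (fun i => (i + c) % N) (Iio N) (Iio N) := by
    have hmaps : MapsTo (fun i => (i + c) % N) (Iio N) (Iio N) := fun i _ => Nat.mod_lt _ hN
    refine ((finite_Iio N).injOn_iff_bijOn_of_mapsTo hmaps).mp fun i hi j hj hij => ?_
    exact (Nat.ModEq.add_right_cancel' c hij).eq_of_lt_of_lt hi hj
  refine ⟨hbij.comp hrot, fun i _ => ?_⟩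
  have := hstep ((i + c) % N) (Nat.mod_lt _ hN)
  rw [Nat.mod_add_mod]
  rwa [Nat.mod_add_mod, Nat.add_right_comm] at this

end GrayCycle

theorem List.Nodup.bijOn_getD {β : Type*} {l : List β} (hl : l.Nodup) (d : β) :
    Set.BijOn (fun i => l.getD i d) (Set.Iio l.length) {x | x ∈ l} := by
  refine ⟨fun i hi => ?_, fun i hi j hj hij => ?_, fun x hx => ?_⟩
  · rw [Set.mem_Iio] at hi
    show l.getD i d ∈ l
    exact (List.getD_eq_getElem l d hi).symm ▸ List.getElem_mem hi
  · simp only [List.getD_eq_getElem _ _ hi, List.getD_eq_getElem _ _ hj] at hij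
    exact (hl.getElem_inj_iff).mp hij
  · obtain ⟨i, hi, rfl⟩ := List.mem_iff_getElem.mp hx
    exact ⟨i, hi, List.getD_eq_getElem _ _ hi⟩

section BinGray

theorem length_binGray (m : ℕ) : (binGray m).length = 2 ^ m := by
  induction m with
  | zero => rfl
  | succ m ih => simp [binGray, ih, pow_succ, mul_two]

theorem mem_binGray_iff {m : ℕ} {w : List (Fin 2)} : w ∈ binGray m ↔ w.length = m := by
  induction m generalizing w with
  | zero => simp [binGray]
  | succ m ih =>
    cases w with
    | nil => simp [binGray]
    | cons a u => fin_cases a <;> simp [binGray, ih]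

theorem nodup_binGray (m : ℕ) : (binGray m).Nodup := by
  induction m with
  | zero => simp [binGray]
  | succ m ih =>
    refine List.Nodup.append (ih.map fun _ _ => List.cons_injective.eq_iff.mp)
      ((List.nodup_reverse.mpr ih).map fun _ _ => List.cons_injective.eq_iff.mp) ?_
    simp [List.disjoint_left]

theorem binGray_succ_getD_of_lt {m i : ℕ} (h : i < 2 ^ m) :
    (binGray (m + 1)).getD i [] = 0 :: (binGray m).getD i [] := by
  simp [binGray, List.getD_eq_getElem?_getD, List.getElem?_append_left, length_binGray, h]

theorem binGray_succ_getD_sub {m j : ℕ} (h : j < 2 ^ m) :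
    (binGray (m + 1)).getD (2 ^ (m + 1) - 1 - j) [] = 1 :: (binGray m).getD j [] := by
  have hp : 2 ^ (m + 1) = 2 ^ m + 2 ^ m := by rw [pow_succ, mul_two]
  have hlen : ((binGray m).map (fun w => (0 : Fin 2) :: w)).length ≤ 2 ^ (m + 1) - 1 - j := by
    simp [length_binGray]; omega
  rw [binGray, List.getD_eq_getElem?_getD, List.getElem?_append_right hlen]
  have hj : 2 ^ (m + 1) - 1 - j - ((binGray m).map (fun w => (0 : Fin 2) :: w)).length
      = 2 ^ m - 1 - j := by
    simp [length_binGray]; omega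
  rw [hj, List.getElem?_map, List.getElem?_reverse (by simp [length_binGray]; omega)]
  simp only [length_binGray, show 2 ^ m - 1 - (2 ^ m - 1 - j) = j by omega,
    List.getD_eq_getElem?_getD, List.getElem?_eq_getElem (show j < (binGray m).length by
      rwa [length_binGray])]
  rfl

theorem binGray_getD_zero (m : ℕ) : (binGray m).getD 0 [] = List.replicate m 0 := by
  induction m with
  | zero => rfl
  | succ m ih => rw [binGray_succ_getD_of_lt (Nat.two_pow_pos m), ih,
      List.replicate_succ]

theorem binGray_getD_one (m : ℕ) : (binGray (m + 1)).getD 1 [] = List.replicate m 0 ++ [1] := by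
  induction m with
  | zero => rfl
  | succ m ih => rw [binGray_succ_getD_of_lt (Nat.one_lt_two_pow (by omega)), ih,
      List.replicate_succ, List.cons_append]

theorem binGray_getD_last (m : ℕ) :
    (binGray (m + 1)).getD (2 ^ (m + 1) - 1) [] = 1 :: List.replicate m 0 := by
  have := binGray_succ_getD_sub (m := m) (Nat.two_pow_pos m)
  rwa [Nat.sub_zero, binGray_getD_zero] at this

theorem binGray_getD_penult (m : ℕ) :
    (binGray (m + 2)).getD (2 ^ (m + 2) - 1 - 1) [] = 1 :: (List.replicate m 0 ++ [1]) := by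
  rw [binGray_succ_getD_sub (Nat.one_lt_two_pow (by omega)), binGray_getD_one]

theorem substRel_binGray_getD_succ {m i : ℕ} (h : i + 1 < 2 ^ m) :
    SubstRel 1 ((binGray m).getD i []) ((binGray m).getD (i + 1) []) := by
  induction m generalizing i with
  | zero => simp at h
  | succ m ih =>
    have hp : 2 ^ (m + 1) = 2 ^ m + 2 ^ m := by rw [pow_succ, mul_two]
    rcases Nat.lt_or_ge (i + 1) (2 ^ m) with hlt | hge
    · rw [binGray_succ_getD_of_lt (by omega), binGray_succ_getD_of_lt hlt]
      exact (ih hlt).cons 0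
    · obtain ⟨j, hj, hi1⟩ : ∃ j < 2 ^ m, i + 1 = 2 ^ (m + 1) - 1 - j :=
        ⟨2 ^ (m + 1) - 1 - (i + 1), by omega, by omega⟩
      rw [hi1, binGray_succ_getD_sub hj]
      rcases Nat.lt_or_ge i (2 ^ m) with hlt | hge'
      · obtain rfl : i = j := by omega
        rw [binGray_succ_getD_of_lt hlt]
        exact substRel_one_cons_cons (by decide) _
      · rw [show i = 2 ^ (m + 1) - 1 - (j + 1) by omega, binGray_succ_getD_sub (by omega)]
        exact (ih (by omega)).symm.cons 1

theorem isGrayCycleOn_binGray (m : ℕ) :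
    IsGrayCycleOn 1 (2 ^ (m + 1)) (fun i => (binGray (m + 1)).getD i [])
      {w | w.length = m + 1} := by
  refine isGrayCycleOn_iff.mpr ⟨?_, fun i h1 hi => ?_, fun _ => ?_⟩
  · simpa [length_binGray, mem_binGray_iff] using (nodup_binGray (m + 1)).bijOn_getD []
  · simpa only [Nat.sub_add_cancel h1] using substRel_binGray_getD_succ (i := i - 1) (by omega)
  · show SubstRel 1 ((binGray (m + 1)).getD (2 ^ (m + 1) - 1) []) ((binGray (m + 1)).getD 0 [])
    rw [binGray_getD_last, binGray_getD_zero, List.replicate_succ]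
    exact substRel_one_cons_cons (by decide) _

end BinGray

theorem add_sub_one_mod_of_lt {N i : ℕ} (hi : i < N) :
    (i + (N - 1)) % N = if i = 0 then N - 1 else i - 1 := by
  split_ifs with h
  · subst h
    rw [Nat.zero_add, Nat.mod_eq_of_lt (by omega)]
  · rw [show i + (N - 1) = i - 1 + N by omega, Nat.add_mod_right, Nat.mod_eq_of_lt (by omega)]

theorem rho1_eq_getD {n0 i : ℕ} (hi : i < 2 ^ n0) :
    rho1 n0 i = (binGray n0).getD ((i + (2 ^ n0 - 1)) % 2 ^ n0) [] := by
  rw [add_sub_one_mod_of_lt hi, rho1]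
  split_ifs <;> rfl

theorem gamma1_eq_getD {n0 i : ℕ} (hi : i < 2 ^ n0) :
    gamma1 n0 i = (binGray n0).getD (2 ^ n0 - 1 - (i + (2 ^ n0 - 1)) % 2 ^ n0) [] := by
  rw [add_sub_one_mod_of_lt hi, gamma1]
  split_ifs
  · rw [Nat.sub_self]
  · rw [show 2 ^ n0 - 1 - (i - 1) = 2 ^ n0 - i by omega]

/-- For `n0 ≥ 2`, the sequences `γ^{n0,1}` and `ρ^{n0,1}` are `σ_1`-Gray cycles over
`{0,1}^{n0}`; moreover `γ^{n0,1}_{[0]} = 0^{n0}`, `ρ^{n0,1}_{[0]} = 1·0^{n0-1}`,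
`γ^{n0,1}_{[2^{n0}-1]} = 0^{n0-1}·1`, and `ρ^{n0,1}_{[2^{n0}-1]} = 1·0^{n0-2}·1`. -/
theorem statement4 (n0 : ℕ) (hn0 : 2 ≤ n0) :
    IsGrayCycleOn 1 (2 ^ n0) (gamma1 n0) {w : List (Fin 2) | w.length = n0} ∧
    IsGrayCycleOn 1 (2 ^ n0) (rho1 n0) {w : List (Fin 2) | w.length = n0} ∧
    gamma1 n0 0 = List.replicate n0 0 ∧
    rho1 n0 0 = 1 :: List.replicate (n0 - 1) 0 ∧
    gamma1 n0 (2 ^ n0 - 1) = List.replicate (n0 - 1) 0 ++ [1] ∧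
    rho1 n0 (2 ^ n0 - 1) = 1 :: (List.replicate (n0 - 2) 0 ++ [1]) := by
  obtain ⟨m, rfl⟩ : ∃ m, n0 = m + 2 := ⟨n0 - 2, by omega⟩
  have hcycle := isGrayCycleOn_binGray (m + 1)
  have hN : 2 ≤ 2 ^ (m + 2) := Nat.le_self_pow (by omega) 2
  refine ⟨(hcycle.comp_reverse.comp_rotate _).congr fun i hi => gamma1_eq_getD hi,
    (hcycle.comp_rotate _).congr fun i hi => rho1_eq_getD hi, binGray_getD_zero _,
    binGray_getD_last _, ?_, ?_⟩
  · rw [gamma1, if_neg (by omega), Nat.sub_sub_self (by omega)]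
    exact binGray_getD_one _
  · rw [rho1, if_neg (by omega)]
    exact binGray_getD_penult m
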